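/- Consider a homogeneous BNPG on the complete graph with n players whose costs are sorted so that c_1 ≤ c_2 ≤ ⋯ ≤ c_n. Let m be the least index i ∈ {1, …, n} such that c_i > Δg(i−1), and set m = n + 1 if no such index exists. Then the action profile x with x_i = 1 for all i < m and x_i = 0 for all i ≥ m is a pure-strategy Nash equilibrium. -/

import Mathlib

/-- Finite difference `Δg(m) = g(m+1) − g(m)`. -/
def Δg (g : ℕ → ℝ) (m : ℕ) : ℝ := g (m + 1) - g m

/-- Number of investing neighbors of player `i` under profile `x` in graph `G`. -/
noncomputable def nInv {V : Type*} (G : SimpleGraph V) (x : V → Bool) (i : V) : ℕ :=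
  {j | G.Adj i j ∧ x j = true}.ncard

/-- Pure-strategy Nash equilibrium of the BNPG on `G` with externalities `g` and costs `c`. -/
def IsPSNE {V : Type*} (G : SimpleGraph V) (g : V → ℕ → ℝ) (c : V → ℝ)
    (x : V → Bool) : Prop :=
  ∀ i, (x i = true → c i ≤ Δg (g i) (nInv G x i)) ∧
       (x i = false → Δg (g i) (nInv G x i) ≤ c i)

/-! On the complete graph each of the `m` investors sees `m - 1` investing neighbours and
each non-investor sees `m`. Since the costs are sorted, the investors' conditions reduce to
`c (m - 1) ≤ Δg (m - 1)` and the non-investors' to `Δg m < c m`. -/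

open Finset

section CompleteGraph

variable {V : Type*} [Fintype V] [DecidableEq V]

lemma nInv_top (x : V → Bool) (i : V) :
    nInv ⊤ x i = #(({j | x j = true} : Finset V).erase i) := by
  rw [nInv, ← Set.ncard_coe_finset]
  congr 1
  ext j
  simp only [Set.mem_ofPred_eq, SimpleGraph.top_adj, coe_erase, coe_filter, Set.mem_sdiff,
    mem_univ, true_and, Set.mem_singleton_iff]
  tauto

lemma nInv_top_of_true {x : V → Bool} {i : V} (hi : x i = true) :
    nInv ⊤ x i = #({j | x j = true} : Finset V) - 1 := by
  rw [nInv_top, card_erase_of_mem (by simpa using hi)]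

lemma nInv_top_of_false {x : V → Bool} {i : V} (hi : x i = false) :
    nInv ⊤ x i = #({j | x j = true} : Finset V) := by
  rw [nInv_top, erase_eq_of_notMem (by simpa using hi)]

theorem isPSNE_top_iff (g : ℕ → ℝ) (c : V → ℝ) (x : V → Bool) :
    IsPSNE ⊤ (fun _ => g) c x ↔
      ∀ i, (x i = true → c i ≤ Δg g (#({j | x j = true} : Finset V) - 1)) ∧
        (x i = false → Δg g #({j | x j = true} : Finset V) ≤ c i) := by
  refine forall_congr' fun i => and_congr ?_ ?_
  · exact ⟨fun h hi => nInv_top_of_true hi ▸ h hi, fun h hi => (nInv_top_of_true hi).symm ▸ h hi⟩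
  · exact ⟨fun h hi => nInv_top_of_false hi ▸ h hi,
      fun h hi => (nInv_top_of_false hi).symm ▸ h hi⟩

end CompleteGraph

theorem stmt3_general (n : ℕ) (g : ℕ → ℝ) (c : Fin n → ℝ)
    (hsorted : ∀ i j : Fin n, i ≤ j → c i ≤ c j)
    (m : ℕ) (hmn : m ≤ n)
    (hleast : ∀ j : Fin n, (j : ℕ) < m → c j ≤ Δg g (j : ℕ))
    (hm : ∀ h : m < n, Δg g m < c ⟨m, h⟩) :
    IsPSNE (⊤ : SimpleGraph (Fin n)) (fun _ => g) c (fun j => decide ((j : ℕ) < m)) := by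
  have hcard : #({j | decide ((j : ℕ) < m) = true} : Finset (Fin n)) = m := by
    simpa [min_eq_right hmn] using Fin.card_filter_val_lt (n := n) (m := m)
  rw [isPSNE_top_iff, hcard]
  intro i
  constructor
  · intro hi
    replace hi : (i : ℕ) < m := by simpa using hi
    let last : Fin n := ⟨m - 1, by omega⟩
    calc c i ≤ c last := hsorted _ _ (Fin.le_def.2 (by simp [last]; omega))
      _ ≤ Δg g (m - 1) := hleast last (by simp [last]; omega)
  · intro hi
    replace hi : m ≤ i := by simpa using hi
    have hm_lt : m < n := hi.trans_lt i.isLt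
    exact (hm hm_lt).le.trans (hsorted _ _ (Fin.le_def.2 hi))

/-- homogeneous BNPG on the complete graph with sorted costs
`c 0 ≤ c 1 ≤ ⋯` (players `0,…,n−1`).  With `m` the least index `j` such that
`c j > Δg(j)` (and `m = n` if no such index exists), the profile investing exactly on the
players with index `< m` is a PSNE.  (Here indices are 0-based, so player `j` is the
`(j+1)`-st player and the paper's condition `c_i > Δg(i−1)` reads `c j > Δg(j)`.) -/
theorem stmt3 (n : ℕ) (g : ℕ → ℝ) (hmono : Monotone g) (c : Fin n → ℝ)
    (hsorted : ∀ i j : Fin n, i ≤ j → c i ≤ c j)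
    (m : ℕ) (hmn : m ≤ n)
    (hleast : ∀ j : Fin n, (j : ℕ) < m → c j ≤ Δg g (j : ℕ))
    (hm : ∀ h : m < n, Δg g m < c ⟨m, h⟩) :
    IsPSNE (⊤ : SimpleGraph (Fin n)) (fun _ => g) c (fun j => decide ((j : ℕ) < m)) :=
  stmt3_general n g c hsorted m hmn hleast hm
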